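/- arXiv:1803.01831 — 4 statements merged into one kernel-verified Lean document; each statement's English description precedes it below -/
import Mathlib

section
/- Let A ≤ B in K_α and let (B,C) be an essential minimal pair with γ = -δ(C/B) > 0, and suppose δ(A) ≥ γ. Then the free join D of k+1 isomorphic copies of C over B—where k is the nonnegative integer with kγ ≤ δ(B/A) < (k+1)γ—lies in K_α, and (A,D) is an essential minimal pair with 0 > δ(D/A) ≥ -γ. -/
open Finset

/-- The number of subsets of `A` on which the relation `E` holds. -/
noncomputable def edgeCount {L V : Type} (rel : L → Finset V → Prop) (E : L)
    (A : Finset V) : ℕ :=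
  {e : Finset V | e ⊆ A ∧ rel E e}.ncard

/-- The rank function `δ(A) = |A| - ∑_E α_E · N_E(A)`. -/
noncomputable def delta {L V : Type} [Fintype L] (α : L → ℝ)
    (rel : L → Finset V → Prop) (A : Finset V) : ℝ :=
  (A.card : ℝ) - ∑ E, α E * (edgeCount rel E A : ℝ)

/-- `A` is strong in `B`: `A ⊆ B` and `δ(A) ≤ δ(A')` for all `A ⊆ A' ⊆ B`. -/
def strong {L V : Type} [Fintype L] (α : L → ℝ) (rel : L → Finset V → Prop)
    (A B : Finset V) : Prop :=
  A ⊆ B ∧ ∀ A' : Finset V, A ⊆ A' → A' ⊆ B → delta α rel A ≤ delta α rel A'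

/-- Membership in `K_α`: all substructures have nonnegative rank. -/
def inK {L V : Type} [Fintype L] (α : L → ℝ) (rel : L → Finset V → Prop)
    (A : Finset V) : Prop :=
  ∀ A' ⊆ A, 0 ≤ delta α rel A'

/-- `(A, B)` is a minimal pair: `A ≤ C` for all `A ⊆ C ⊊ B` but `A ≰ B`. -/
def minPair {L V : Type} [Fintype L] (α : L → ℝ) (rel : L → Finset V → Prop)
    (A B : Finset V) : Prop :=
  A ⊆ B ∧ (∀ C : Finset V, A ⊆ C → C ⊂ B → strong α rel A C) ∧ ¬ strong α rel A B

/-- `(B, C)` is an essential minimal pair: a minimal pair such that additionally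
`δ(C'/C' ∩ B) ≥ 0` for every proper substructure `C' ⊊ C`. -/
def essMinPair {L V : Type} [Fintype L] [DecidableEq V] (α : L → ℝ)
    (rel : L → Finset V → Prop) (B C : Finset V) : Prop :=
  minPair α rel B C ∧
    ∀ C' : Finset V, C' ⊂ C → 0 ≤ delta α rel C' - delta α rel (C' ∩ B)

/-- `C'` is an isomorphic copy of `C` over `B`: the image of `C` under an
injective map fixing `B` pointwise and preserving all relations on subsets of `C`. -/
def copyOver {L V : Type} [DecidableEq V] (rel : L → Finset V → Prop)
    (B C C' : Finset V) : Prop :=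
  ∃ f : V → V, Set.InjOn f ↑C ∧ (∀ b ∈ B, f b = b) ∧ C.image f = C' ∧
    ∀ E (e : Finset V), e ⊆ C → (rel E e ↔ rel E (e.image f))

open Classical in
noncomputable def eFilt {L V : Type} (rel : L → Finset V → Prop) (E : L)
    (S : Finset V) : Finset (Finset V) :=
  S.powerset.filter (fun e => rel E e)

lemma mem_eFilt {L V : Type} (rel : L → Finset V → Prop) (E : L)
    (S : Finset V) (e : Finset V) : e ∈ eFilt rel E S ↔ e ⊆ S ∧ rel E e := by
  classical
  simp [eFilt, Finset.mem_filter, Finset.mem_powerset]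

lemma edgeCount_eq {L V : Type} (rel : L → Finset V → Prop) (E : L)
    (S : Finset V) : edgeCount rel E S = (eFilt rel E S).card := by
  rw [edgeCount, ← Set.ncard_coe_finset]
  congr 1
  ext e
  simp [mem_eFilt]

lemma eFilt_inter {L V : Type} [DecidableEq V] (rel : L → Finset V → Prop) (E : L)
    (S T : Finset V) : eFilt rel E (S ∩ T) = eFilt rel E S ∩ eFilt rel E T := by
  ext e; simp only [mem_eFilt, Finset.mem_inter, Finset.subset_inter_iff]; tauto

lemma eFilt_mono {L V : Type} (rel : L → Finset V → Prop) (E : L)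
    {S T : Finset V} (h : S ⊆ T) : eFilt rel E S ⊆ eFilt rel E T := by
  intro e he; rw [mem_eFilt] at *; exact ⟨he.1.trans h, he.2⟩

lemma delta_submodular {L V : Type} [Fintype L] [DecidableEq V] (α : L → ℝ)
    (hα : ∀ E, 0 ≤ α E) (rel : L → Finset V → Prop) (S T : Finset V) :
    delta α rel (S ∪ T) + delta α rel (S ∩ T) ≤ delta α rel S + delta α rel T := by
  classical
  have hcard : (S ∪ T).card + (S ∩ T).card = S.card + T.card :=
    Finset.card_union_add_card_inter S T
  have hedge : ∀ E : L, edgeCount rel E S + edgeCount rel E T ≤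
      edgeCount rel E (S ∪ T) + edgeCount rel E (S ∩ T) := by
    intro E
    simp only [edgeCount_eq]
    have h1 : eFilt rel E S ∪ eFilt rel E T ⊆ eFilt rel E (S ∪ T) := by
      intro e he
      rcases Finset.mem_union.1 he with h | h
      · exact eFilt_mono rel E Finset.subset_union_left h
      · exact eFilt_mono rel E Finset.subset_union_right h
    have h2 := Finset.card_union_add_card_inter (eFilt rel E S) (eFilt rel E T)
    have h3 := Finset.card_le_card h1
    rw [eFilt_inter]
    omega
  simp only [delta]
  have hsum : ∑ E, α E * (edgeCount rel E S : ℝ) + ∑ E, α E * (edgeCount rel E T : ℝ) ≤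
      ∑ E, α E * (edgeCount rel E (S ∪ T) : ℝ) + ∑ E, α E * (edgeCount rel E (S ∩ T) : ℝ) := by
    rw [← Finset.sum_add_distrib, ← Finset.sum_add_distrib]
    apply Finset.sum_le_sum
    intro E _
    have := hedge E
    have hα' := hα E
    rw [← mul_add, ← mul_add]
    apply mul_le_mul_of_nonneg_left _ hα'
    exact_mod_cast this
  have : ((S ∪ T).card : ℝ) + ((S ∩ T).card : ℝ) = (S.card : ℝ) + (T.card : ℝ) := by
    exact_mod_cast hcard
  linarith

lemma sunflower_card {W : Type} [DecidableEq W] {k : ℕ} (S : Fin (k+1) → Finset W) (T : Finset W)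
    (hT : ∀ i, T ⊆ S i) (hd : ∀ i j, i ≠ j → S i ∩ S j = T) :
    ∑ i, (S i).card = (univ.biUnion S).card + k * T.card := by
  classical
  have hdisj : ∀ i ∈ (univ : Finset (Fin (k+1))), ∀ j ∈ univ, i ≠ j →
      Disjoint (S i \ T) (S j \ T) := by
    intro i _ j _ hij
    rw [Finset.disjoint_left]
    intro a ha ha'
    rw [Finset.mem_sdiff] at ha ha'
    exact ha.2 (by rw [← hd i j hij]; exact Finset.mem_inter.2 ⟨ha.1, ha'.1⟩)
  have h1 : ∑ i, (S i).card = ∑ i : Fin (k+1), (T.card + (S i \ T).card) := by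
    apply Finset.sum_congr rfl
    intro i _
    have := Finset.card_sdiff_of_subset (hT i)
    have := Finset.card_le_card (hT i)
    omega
  have h2 : univ.biUnion (fun i => S i \ T) = univ.biUnion S \ T := by
    ext a; simp [Finset.mem_sdiff]
  have h3 : ∑ i : Fin (k+1), (S i \ T).card = (univ.biUnion S \ T).card := by
    rw [← Finset.card_biUnion hdisj, h2]
  have hTU : T ⊆ univ.biUnion S := (hT 0).trans (Finset.subset_biUnion_of_mem S (Finset.mem_univ 0))
  have h4 := Finset.card_sdiff_of_subset hTU
  have h5 := Finset.card_le_card hTU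
  rw [h1, Finset.sum_add_distrib, h3, h4]
  simp [Finset.card_univ]
  ring_nf
  omega

lemma image_injOn_subsets {V : Type} [DecidableEq V] {f : V → V} {C₀ : Finset V}
    (hinj : Set.InjOn f ↑C₀) {e e' : Finset V} (he : e ⊆ C₀) (he' : e' ⊆ C₀)
    (h : e.image f = e'.image f) : e = e' := by
  apply Finset.Subset.antisymm <;> intro a ha
  · have : f a ∈ e'.image f := by rw [← h]; exact Finset.mem_image_of_mem f ha
    obtain ⟨b, hb, hfb⟩ := Finset.mem_image.1 this
    rwa [← hinj (he' hb) (he ha) hfb]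
  · have : f a ∈ e.image f := by rw [h]; exact Finset.mem_image_of_mem f ha
    obtain ⟨b, hb, hfb⟩ := Finset.mem_image.1 this
    rwa [← hinj (he hb) (he' ha) hfb]

lemma copy_facts {L V : Type} [Fintype L] [DecidableEq V] (α : L → ℝ)
    (rel : L → Finset V → Prop) {B C₀ Ci : Finset V} (hB : B ⊆ C₀)
    (h : copyOver rel B C₀ Ci) :
    B ⊆ Ci ∧ ∀ Y ⊆ Ci, ∃ X, X ⊆ C₀ ∧ X ∩ B = Y ∩ B ∧
      delta α rel X = delta α rel Y ∧ (X = C₀ ↔ Y = Ci) := by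
  classical
  obtain ⟨f, hinj, hfix, himg, hrel⟩ := h
  have hBCi : B ⊆ Ci := by
    intro b hb
    rw [← himg, Finset.mem_image]
    exact ⟨b, hB hb, hfix b hb⟩
  refine ⟨hBCi, fun Y hY => ?_⟩
  set X := C₀.filter (fun x => f x ∈ Y) with hXdef
  have hXC : X ⊆ C₀ := Finset.filter_subset _ _
  have hXY : X.image f = Y := by
    apply Finset.Subset.antisymm
    · intro y hy
      obtain ⟨x, hx, hfx⟩ := Finset.mem_image.1 hy
      rw [← hfx]
      exact (Finset.mem_filter.1 hx).2
    · intro y hy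
      have : y ∈ C₀.image f := by rw [himg]; exact hY hy
      obtain ⟨x, hx, hfx⟩ := Finset.mem_image.1 this
      exact Finset.mem_image.2 ⟨x, Finset.mem_filter.2 ⟨hx, by rw [hfx]; exact hy⟩, hfx⟩
  have hXB : X ∩ B = Y ∩ B := by
    rw [← hXY]
    apply Finset.Subset.antisymm
    · intro a ha
      obtain ⟨haX, haB⟩ := Finset.mem_inter.1 ha
      refine Finset.mem_inter.2 ⟨?_, haB⟩
      rw [Finset.mem_image]
      exact ⟨a, haX, hfix a haB⟩
    · intro y hy
      obtain ⟨hyI, hyB⟩ := Finset.mem_inter.1 hy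
      obtain ⟨x, hx, hfx⟩ := Finset.mem_image.1 hyI
      have : x = y := hinj (hXC hx) (hB hyB) (by rw [hfx, hfix y hyB])
      exact Finset.mem_inter.2 ⟨this ▸ hx, hyB⟩
  have hcard : X.card = Y.card := by
    rw [← hXY]
    exact (Finset.card_image_of_injOn (hinj.mono (by exact_mod_cast hXC))).symm
  have hec : ∀ E, edgeCount rel E X = edgeCount rel E Y := by
    intro E
    rw [edgeCount_eq, edgeCount_eq]
    apply Finset.card_bij (fun e _ => e.image f)
    · intro e he
      rw [mem_eFilt] at he ⊢
      refine ⟨by rw [← hXY]; exact Finset.image_subset_image he.1, ?_⟩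
      exact (hrel E e (he.1.trans hXC)).1 he.2
    · intro e he e' he' heq
      rw [mem_eFilt] at he he'
      exact image_injOn_subsets hinj (he.1.trans hXC) (he'.1.trans hXC) heq
    · intro y hy
      rw [mem_eFilt] at hy
      refine ⟨X.filter (fun x => f x ∈ y), ?_, ?_⟩
      · rw [mem_eFilt]
        have hsub : X.filter (fun x => f x ∈ y) ⊆ X := Finset.filter_subset _ _
        have himg' : (X.filter (fun x => f x ∈ y)).image f = y := by
          apply Finset.Subset.antisymm
          · intro u hu
            obtain ⟨x, hx, hfx⟩ := Finset.mem_image.1 hu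
            rw [← hfx]; exact (Finset.mem_filter.1 hx).2
          · intro u hu
            have : u ∈ X.image f := by rw [hXY]; exact hy.1 hu
            obtain ⟨x, hx, hfx⟩ := Finset.mem_image.1 this
            exact Finset.mem_image.2 ⟨x, Finset.mem_filter.2 ⟨hx, by rw [hfx]; exact hu⟩, hfx⟩
        refine ⟨hsub, ?_⟩
        rw [hrel E _ (hsub.trans hXC), himg']
        exact hy.2
      · apply Finset.Subset.antisymm
        · intro u hu
          obtain ⟨x, hx, hfx⟩ := Finset.mem_image.1 hu
          rw [← hfx]; exact (Finset.mem_filter.1 hx).2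
        · intro u hu
          have : u ∈ X.image f := by rw [hXY]; exact hy.1 hu
          obtain ⟨x, hx, hfx⟩ := Finset.mem_image.1 this
          exact Finset.mem_image.2 ⟨x, Finset.mem_filter.2 ⟨hx, by rw [hfx]; exact hu⟩, hfx⟩
  have hdelta : delta α rel X = delta α rel Y := by
    simp only [delta, hcard]
    congr 1
    apply Finset.sum_congr rfl
    intro E _
    rw [hec E]
  refine ⟨X, hXC, hXB, hdelta, ?_, ?_⟩
  · intro hXC₀
    rw [← himg, ← hXC₀, hXY]
  · intro hYCi
    apply image_injOn_subsets hinj hXC (le_refl C₀)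
    rw [hXY, himg, hYCi]

/-- Let `A ≤ B` in `K_α`, `(B, C₀)` an essential minimal pair with
`γ = -δ(C₀/B) > 0`, and `δ(A) ≥ γ`. If `k` is the nonnegative integer with
`kγ ≤ δ(B/A) < (k+1)γ` and `D` is the free join of `k+1` isomorphic copies of
`C₀` over `B`, then `D ∈ K_α` and `(A, D)` is an essential minimal pair with
`0 > δ(D/A) ≥ -γ`. -/
theorem stmt12 {L V : Type} [Fintype L] [DecidableEq V] (α : L → ℝ)
    (hα : ∀ E, 0 < α E ∧ α E ≤ 1) (ar : L → ℕ) (har : ∀ E, 2 ≤ ar E)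
    (rel : L → Finset V → Prop) (hedge : ∀ E e, rel E e → e.card = ar E)
    (A B C₀ : Finset V) (hBK : inK α rel B) (hCK : inK α rel C₀)
    (hAB : strong α rel A B) (hmp : essMinPair α rel B C₀)
    (γ : ℝ) (hγ : γ = -(delta α rel C₀ - delta α rel B)) (hγpos : 0 < γ)
    (hAγ : γ ≤ delta α rel A)
    (k : ℕ) (hk : (k : ℝ) * γ ≤ delta α rel B - delta α rel A)
    (hk' : delta α rel B - delta α rel A < ((k : ℝ) + 1) * γ)
    (C : Fin (k + 1) → Finset V)
    (hcopy : ∀ i, copyOver rel B C₀ (C i))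
    (hdisj : ∀ i j, i ≠ j → C i ∩ C j = B)
    (D : Finset V) (hD : D = Finset.univ.biUnion C)
    (hfree : ∀ E (e : Finset V), rel E e → e ⊆ D → ∃ i, e ⊆ C i) :
    inK α rel D ∧ essMinPair α rel A D ∧
      delta α rel D - delta α rel A < 0 ∧
      -γ ≤ delta α rel D - delta α rel A := by
  classical
  have hB0 : B ⊆ C₀ := hmp.1.1
  have hcf := fun i => copy_facts α rel hB0 (hcopy i)
  have hBC : ∀ i, B ⊆ C i := fun i => (hcf i).1
  have hCD : ∀ i, C i ⊆ D := by
    intro i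
    rw [hD]
    exact Finset.subset_biUnion_of_mem C (Finset.mem_univ i)
  have hBD : B ⊆ D := (hBC 0).trans (hCD 0)
  have hAD : A ⊆ D := hAB.1.trans hBD
  have hγC : delta α rel C₀ = delta α rel B - γ := by rw [hγ]; ring
  -- delta of each copy
  have hdC : ∀ i, delta α rel (C i) = delta α rel C₀ := by
    intro i
    obtain ⟨X, hXC, hXB, hXd, hXiff⟩ := (hcf i).2 (C i) (le_refl _)
    rw [← hXd, hXiff.2 rfl]
  -- decomposition lemma
  have hdec : ∀ X : Finset V, X ⊆ D →
      ∑ i, delta α rel (X ∩ C i) = delta α rel X + (k : ℝ) * delta α rel (X ∩ B) := by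
    intro X hX
    have hT : ∀ i, X ∩ B ⊆ X ∩ C i := fun i =>
      Finset.inter_subset_inter (le_refl X) (hBC i)
    have hd' : ∀ i j, i ≠ j → (X ∩ C i) ∩ (X ∩ C j) = X ∩ B := by
      intro i j hij
      rw [Finset.inter_inter_inter_comm, Finset.inter_self, hdisj i j hij]
    have hU : univ.biUnion (fun i => X ∩ C i) = X := by
      apply Finset.Subset.antisymm
      · intro x hx
        obtain ⟨i, _, hi⟩ := Finset.mem_biUnion.1 hx
        exact (Finset.mem_inter.1 hi).1
      · intro x hx
        have hxD : x ∈ D := hX hx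
        rw [hD] at hxD
        obtain ⟨i, _, hi⟩ := Finset.mem_biUnion.1 hxD
        exact Finset.mem_biUnion.2 ⟨i, Finset.mem_univ i, Finset.mem_inter.2 ⟨hx, hi⟩⟩
    have hcard := sunflower_card (fun i => X ∩ C i) (X ∩ B) hT hd'
    rw [hU] at hcard
    have hedge' : ∀ E, ∑ i, edgeCount rel E (X ∩ C i) =
        edgeCount rel E X + k * edgeCount rel E (X ∩ B) := by
      intro E
      simp only [edgeCount_eq]
      have h1 : ∀ i, eFilt rel E (X ∩ B) ⊆ eFilt rel E (X ∩ C i) := fun i =>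
        eFilt_mono rel E (hT i)
      have h2 : ∀ i j, i ≠ j →
          eFilt rel E (X ∩ C i) ∩ eFilt rel E (X ∩ C j) = eFilt rel E (X ∩ B) := by
        intro i j hij
        rw [← eFilt_inter, hd' i j hij]
      have h3 := sunflower_card (fun i => eFilt rel E (X ∩ C i)) (eFilt rel E (X ∩ B)) h1 h2
      have hU2 : univ.biUnion (fun i => eFilt rel E (X ∩ C i)) = eFilt rel E X := by
        apply Finset.Subset.antisymm
        · intro e he
          obtain ⟨i, _, hi⟩ := Finset.mem_biUnion.1 he
          exact eFilt_mono rel E Finset.inter_subset_left hi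
        · intro e he
          rw [mem_eFilt] at he
          obtain ⟨i, hi⟩ := hfree E e he.2 (he.1.trans hX)
          exact Finset.mem_biUnion.2 ⟨i, Finset.mem_univ i,
            (mem_eFilt rel E _ e).2 ⟨Finset.subset_inter he.1 hi, he.2⟩⟩
      rw [hU2] at h3
      exact h3
    have e1 : (∑ i, ((X ∩ C i).card : ℝ)) = (X.card : ℝ) + (k : ℝ) * ((X ∩ B).card : ℝ) := by
      exact_mod_cast hcard
    have e2 : ∀ E, (∑ i, (edgeCount rel E (X ∩ C i) : ℝ)) =
        (edgeCount rel E X : ℝ) + (k : ℝ) * (edgeCount rel E (X ∩ B) : ℝ) := by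
      intro E; exact_mod_cast hedge' E
    have swap : ∑ i, ∑ E, α E * (edgeCount rel E (X ∩ C i) : ℝ) =
        ∑ E, α E * ((edgeCount rel E X : ℝ) + (k : ℝ) * (edgeCount rel E (X ∩ B) : ℝ)) := by
      rw [Finset.sum_comm]
      apply Finset.sum_congr rfl
      intro E _
      rw [← Finset.mul_sum, e2 E]
    have expand : ∑ E, α E * ((edgeCount rel E X : ℝ) + (k : ℝ) * (edgeCount rel E (X ∩ B) : ℝ)) =
        (∑ E, α E * (edgeCount rel E X : ℝ)) +
          (k : ℝ) * ∑ E, α E * (edgeCount rel E (X ∩ B) : ℝ) := by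
      rw [Finset.mul_sum, ← Finset.sum_add_distrib]
      apply Finset.sum_congr rfl
      intro E _
      ring
    simp only [delta]
    rw [Finset.sum_sub_distrib, e1, swap, expand]
    ring
  -- per-copy bounds
  have hterm : ∀ X : Finset V, X ⊆ D → ∀ i,
      (C i ⊆ X → delta α rel (X ∩ C i) - delta α rel (X ∩ B) = -γ) ∧
      (¬ C i ⊆ X → 0 ≤ delta α rel (X ∩ C i) - delta α rel (X ∩ B)) := by
    intro X hX i
    constructor
    · intro hfull
      have h1 : X ∩ C i = C i := Finset.inter_eq_right.2 hfull
      have h2 : X ∩ B = B := Finset.inter_eq_right.2 ((hBC i).trans hfull)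
      rw [h1, h2, hdC i, hγC]
      ring
    · intro hnot
      have hsub : X ∩ C i ⊆ C i := Finset.inter_subset_right
      obtain ⟨X', hX'C, hX'B, hX'd, hX'iff⟩ := (hcf i).2 (X ∩ C i) hsub
      have hXiB : (X ∩ C i) ∩ B = X ∩ B := by
        rw [Finset.inter_assoc, Finset.inter_eq_right.2 (hBC i)]
      have hne : X' ≠ C₀ := by
        intro h
        have h2 := hX'iff.1 h
        exact hnot (by rw [← h2]; exact Finset.inter_subset_left)
      have hss : X' ⊂ C₀ := Finset.ssubset_iff_subset_ne.2 ⟨hX'C, hne⟩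
      have := hmp.2 X' hss
      rw [hX'd, hX'B, hXiB] at this
      exact this
  -- X = D iff all copies inside
  have hallfull : ∀ X : Finset V, X ⊆ D → (∀ i, C i ⊆ X) → X = D := by
    intro X hX hall
    apply Finset.Subset.antisymm hX
    rw [hD]
    intro x hx
    obtain ⟨i, _, hi⟩ := Finset.mem_biUnion.1 hx
    exact hall i hi
  -- case with no full copy
  have hnofull : ∀ X : Finset V, X ⊆ D → (∀ i, ¬ C i ⊆ X) →
      delta α rel (X ∩ B) ≤ delta α rel X := by
    intro X hX hno
    have h := hdec X hX
    have hsum : ((k : ℝ) + 1) * delta α rel (X ∩ B) ≤ ∑ i, delta α rel (X ∩ C i) := by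
      have : ∑ _i : Fin (k+1), delta α rel (X ∩ B) ≤ ∑ i, delta α rel (X ∩ C i) := by
        apply Finset.sum_le_sum
        intro i _
        have := (hterm X hX i).2 (hno i)
        linarith
      simpa [Finset.sum_const, Finset.card_univ, nsmul_eq_mul, add_comm] using this
    have hcast : ((k : ℝ) + 1) = ((k + 1 : ℕ) : ℝ) := by push_cast; ring
    linarith
  -- case with at least one full copy but X ≠ D
  have hsome : ∀ X : Finset V, X ⊆ D → X ≠ D → (∃ i, C i ⊆ X) →
      delta α rel B - (k : ℝ) * γ ≤ delta α rel X ∧ B ⊆ X := by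
    intro X hX hne ⟨i₀, hi₀⟩
    have hBX : B ⊆ X := (hBC i₀).trans hi₀
    have hXB : X ∩ B = B := Finset.inter_eq_right.2 hBX
    obtain ⟨j₀, hj₀⟩ : ∃ j, ¬ C j ⊆ X := by
      by_contra h
      push_neg at h
      exact hne (hallfull X hX h)
    have h := hdec X hX
    have hterm' := hterm X hX
    -- sum over erase j₀ bounded below by -γ each; term j₀ ≥ 0
    have hlow : ∀ i, -γ ≤ delta α rel (X ∩ C i) - delta α rel (X ∩ B) := by
      intro i
      by_cases hc : C i ⊆ X
      · exact le_of_eq ((hterm' i).1 hc).symm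
      · have := (hterm' i).2 hc
        linarith
    have hj₀' : 0 ≤ delta α rel (X ∩ C j₀) - delta α rel (X ∩ B) := (hterm' j₀).2 hj₀
    have hsum : (k : ℝ) * (-γ) + ((k : ℝ) + 1) * delta α rel (X ∩ B) ≤
        ∑ i, delta α rel (X ∩ C i) := by
      have hkey : ∑ i, (delta α rel (X ∩ C i) - delta α rel (X ∩ B)) ≥ (k : ℝ) * (-γ) := by
        rw [← Finset.sum_erase_add _ _ (Finset.mem_univ j₀)]
        have hb1 : ∑ i ∈ univ.erase j₀, (delta α rel (X ∩ C i) - delta α rel (X ∩ B)) ≥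
            ∑ _i ∈ univ.erase j₀, (-γ) := by
          apply Finset.sum_le_sum
          intro i _
          exact hlow i
        have hcarderase : (univ.erase j₀).card = k := by
          rw [Finset.card_erase_of_mem (Finset.mem_univ j₀), Finset.card_univ]
          simp
        rw [Finset.sum_const, hcarderase, nsmul_eq_mul] at hb1
        linarith
      have hsplit : ∑ i, (delta α rel (X ∩ C i) - delta α rel (X ∩ B)) =
          (∑ i, delta α rel (X ∩ C i)) - ((k : ℝ) + 1) * delta α rel (X ∩ B) := by
        rw [Finset.sum_sub_distrib, Finset.sum_const, Finset.card_univ]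
        simp [nsmul_eq_mul]
      rw [hsplit] at hkey
      linarith
    rw [hXB] at h hsum
    constructor
    · linarith
    · exact hBX
  -- delta of D
  have hdD : delta α rel D = delta α rel B - ((k : ℝ) + 1) * γ := by
    have h := hdec D (le_refl D)
    have hDC : ∀ i, D ∩ C i = C i := fun i => Finset.inter_eq_right.2 (hCD i)
    have hDB : D ∩ B = B := Finset.inter_eq_right.2 hBD
    rw [hDB] at h
    have hsum : ∑ i, delta α rel (D ∩ C i) = ((k : ℝ) + 1) * (delta α rel B - γ) := by
      have : ∀ i, delta α rel (D ∩ C i) = delta α rel B - γ := by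
        intro i
        rw [hDC i, hdC i, hγC]
      rw [Finset.sum_congr rfl (fun i _ => this i), Finset.sum_const, Finset.card_univ]
      simp [nsmul_eq_mul]
    rw [hsum] at h
    linarith
  -- key inequality : δ(A) ≤ δ(X) for A ⊆ X ⊆ D with X ≠ D
  have hAle : ∀ X : Finset V, A ⊆ X → X ⊆ D → X ≠ D → delta α rel A ≤ delta α rel X := by
    intro X hAX hXD hne
    by_cases hfull : ∃ i, C i ⊆ X
    · have := (hsome X hXD hne hfull).1
      linarith
    · push_neg at hfull
      have h1 := hnofull X hXD hfull
      have h2 : delta α rel A ≤ delta α rel (X ∩ B) :=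
        hAB.2 (X ∩ B) (Finset.subset_inter hAX hAB.1) Finset.inter_subset_right
      linarith
  -- δ(D) - δ(A) bounds
  have hDA1 : delta α rel D - delta α rel A < 0 := by
    rw [hdD]; linarith
  have hDA2 : -γ ≤ delta α rel D - delta α rel A := by
    rw [hdD]; linarith
  refine ⟨?_, ⟨⟨hAD, ?_, ?_⟩, ?_⟩, hDA1, hDA2⟩
  · -- inK
    intro X hX
    by_cases hne : X = D
    · subst hne
      linarith [hdD]
    · by_cases hfull : ∃ i, C i ⊆ X
      · have := (hsome X hX hne hfull).1
        linarith
      · push_neg at hfull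
        have h1 := hnofull X hX hfull
        have h2 := hBK (X ∩ B) Finset.inter_subset_right
        linarith
  · -- minimal pair middle clause
    intro C' hAC' hC'D
    refine ⟨hAC', fun X hAX hXC' => ?_⟩
    have hXD : X ⊆ D := hXC'.trans hC'D.subset
    have hXne : X ≠ D := by
      intro h
      exact hC'D.not_subset (h ▸ hXC')
    exact hAle X hAX hXD hXne
  · -- not strong
    intro hs
    have := hs.2 D hAD (le_refl D)
    linarith
  · -- essentiality
    intro D' hD'
    have hD'D : D' ⊆ D := hD'.subset
    have hne : D' ≠ D := hD'.ne
    by_cases hfull : ∃ i, C i ⊆ D'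
    · obtain ⟨h1, hBD'⟩ := hsome D' hD'D hne hfull
      have hAD' : A ⊆ D' := hAB.1.trans hBD'
      rw [Finset.inter_eq_right.2 hAD']
      linarith
    · push_neg at hfull
      have h1 := hnofull D' hD'D hfull
      -- δ(D'∩A) ≤ δ(D'∩B) by submodularity
      have hDA : D' ∩ A = (D' ∩ B) ∩ A := by
        rw [Finset.inter_assoc, Finset.inter_comm B A, Finset.inter_eq_left.2 hAB.1]
      have hsub := delta_submodular α (fun E => (hα E).1.le) rel (D' ∩ B) A
      have hAle' : delta α rel A ≤ delta α rel ((D' ∩ B) ∪ A) := by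
        apply hAB.2
        · exact Finset.subset_union_right
        · exact Finset.union_subset Finset.inter_subset_right hAB.1
      rw [hDA]
      linarith
end

section
/- Let A ≤ B in K_α, (B,C) an essential minimal pair with γ = -δ(C/B), and k the nonnegative integer with kγ ≤ δ(B/A) < (k+1)γ. Let D be the free join of k copies of C over B. Then D ∈ K_α, A ≤ D, and 0 ≤ δ(D/A) < γ. Moreover, if (B,G) is any minimal pair with |G| < |C|, then G does not embed into D over B. -/
/-!
Every relation of the free join `D` lies in `B` or in one copy `Cᵢ`, so the rank is modular
along the join: for `X ⊆ D`, `δ(X) = δ(X ∩ B) + ∑ᵢ (δ(X ∩ Cᵢ) - δ(X ∩ B))`. By essentiality a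
summand with `Cᵢ ⊄ X` is nonnegative, while a summand with `Cᵢ ⊆ X` equals `δ(C₀) - δ(B) = -γ`.
So every `X ⊆ D` has rank at least `δ(X ∩ B)` or at least `δ(D) = δ(B) - kγ`, and the choice
of `k` gives `D ∈ K_α`, `A ≤ D` and `0 ≤ δ(D/A) < γ`. The image in `D` of a minimal pair
`(B, G)` with `|G| < |C₀|` contains no copy, hence has rank `≥ δ(B) > δ(G)`.
-/

open Finset

/-- `G` embeds into `D` over `B`: there is an injective relation-preserving map
from `G` into `D` fixing `B` pointwise. -/
def embedsOver {L V : Type} [DecidableEq V] (rel : L → Finset V → Prop)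
    (B G D : Finset V) : Prop :=
  ∃ f : V → V, Set.InjOn f ↑G ∧ (∀ b ∈ B, f b = b) ∧ G.image f ⊆ D ∧
    ∀ E (e : Finset V), e ⊆ G → (rel E e ↔ rel E (e.image f))

section Rank

variable {L V : Type} {rel : L → Finset V → Prop}

theorem minPair.delta_lt [Fintype L] {α : L → ℝ} {A B : Finset V} (h : minPair α rel A B) :
    delta α rel B < delta α rel A := by
  obtain ⟨hAB, hmin, hns⟩ := h
  refine lt_of_not_ge fun hle => hns ⟨hAB, fun Y hAY hYB => ?_⟩
  rcases hYB.eq_or_ssubset with rfl | hYB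
  · exact hle
  · exact (hmin Y hAY hYB).2 Y hAY le_rfl

variable [DecidableEq V]

theorem edgeCount_image {f : V → V} {S Y : Finset V} (hinj : Set.InjOn f S)
    (hrel : ∀ E (e : Finset V), e ⊆ S → (rel E e ↔ rel E (e.image f))) (hYS : Y ⊆ S)
    (E : L) : edgeCount rel E (Y.image f) = edgeCount rel E Y := by
  have himage : {e | e ⊆ Y.image f ∧ rel E e} = image f '' {e | e ⊆ Y ∧ rel E e} := by
    ext e'
    constructor
    · rintro ⟨he', hr⟩
      obtain ⟨e, he, rfl⟩ := subset_image_iff.mp he'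
      exact ⟨e, ⟨he, (hrel E e (he.trans hYS)).mpr hr⟩, rfl⟩
    · rintro ⟨e, ⟨he, hr⟩, rfl⟩
      exact ⟨image_subset_image he, (hrel E e (he.trans hYS)).mp hr⟩
  rw [edgeCount, edgeCount, himage]
  refine Set.InjOn.ncard_image ?_
  rintro e₁ ⟨h₁, -⟩ e₂ ⟨h₂, -⟩ h
  have hcoe := congrArg (fun e : Finset V => (e : Set V)) h
  simp only [coe_image] at hcoe
  exact coe_injective <| (hinj.image_eq_image_iff (coe_subset.mpr (h₁.trans hYS))
    (coe_subset.mpr (h₂.trans hYS))).mp hcoe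

theorem edgeCount_union_add_edgeCount_inter {P Q : Finset V}
    (hfree : ∀ E (e : Finset V), rel E e → e ⊆ P ∪ Q → e ⊆ P ∨ e ⊆ Q) (E : L) :
    edgeCount rel E (P ∪ Q) + edgeCount rel E (P ∩ Q) =
      edgeCount rel E P + edgeCount rel E Q := by
  have hfin : ∀ X : Finset V, {e | e ⊆ X ∧ rel E e}.Finite := fun X =>
    X.powerset.finite_toSet.subset fun e he => mem_coe.mpr (mem_powerset.mpr he.1)
  have hunion : {e | e ⊆ P ∪ Q ∧ rel E e} = {e | e ⊆ P ∧ rel E e} ∪ {e | e ⊆ Q ∧ rel E e} := by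
    ext e
    simp only [Set.mem_ofPred_eq, Set.mem_union]
    constructor
    · rintro ⟨he, hr⟩
      exact (hfree E e hr he).imp (⟨·, hr⟩) (⟨·, hr⟩)
    · rintro (⟨he, hr⟩ | ⟨he, hr⟩)
      exacts [⟨he.trans subset_union_left, hr⟩, ⟨he.trans subset_union_right, hr⟩]
  have hinter : {e | e ⊆ P ∩ Q ∧ rel E e} = {e | e ⊆ P ∧ rel E e} ∩ {e | e ⊆ Q ∧ rel E e} := by
    ext e
    simp only [Set.mem_ofPred_eq, Set.mem_inter_iff, subset_inter_iff]
    tauto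
  rw [edgeCount, edgeCount, hunion, hinter, Set.ncard_union_add_ncard_inter _ _ (hfin P) (hfin Q)]
  rfl

variable [Fintype L] {α : L → ℝ}

theorem delta_image {f : V → V} {S Y : Finset V} (hinj : Set.InjOn f S)
    (hrel : ∀ E (e : Finset V), e ⊆ S → (rel E e ↔ rel E (e.image f))) (hYS : Y ⊆ S) :
    delta α rel (Y.image f) = delta α rel Y := by
  simp only [delta, edgeCount_image hinj hrel hYS,
    card_image_of_injOn (hinj.mono (coe_subset.mpr hYS))]

theorem delta_union_add_delta_inter {P Q : Finset V}
    (hfree : ∀ E (e : Finset V), rel E e → e ⊆ P ∪ Q → e ⊆ P ∨ e ⊆ Q) :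
    delta α rel (P ∪ Q) + delta α rel (P ∩ Q) = delta α rel P + delta α rel Q := by
  have hcard : ((P ∪ Q).card : ℝ) + (P ∩ Q).card = P.card + Q.card := by
    exact_mod_cast card_union_add_card_inter P Q
  have hedges : ∑ E, α E * (edgeCount rel E (P ∪ Q) : ℝ) +
      ∑ E, α E * (edgeCount rel E (P ∩ Q) : ℝ) =
      ∑ E, α E * (edgeCount rel E P : ℝ) + ∑ E, α E * (edgeCount rel E Q : ℝ) := by
    simp only [← sum_add_distrib, ← mul_add]
    refine sum_congr rfl fun E _ => ?_
    exact_mod_cast congrArg (α E * ·) (congrArg (Nat.cast (R := ℝ))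
      (edgeCount_union_add_edgeCount_inter hfree E))
  simp only [delta]
  linarith

end Rank

section Copies

variable {L V : Type} [DecidableEq V] {rel : L → Finset V → Prop} {B C₀ C' : Finset V}

namespace copyOver

theorem subset (hBC₀ : B ⊆ C₀) (h : copyOver rel B C₀ C') : B ⊆ C' := by
  obtain ⟨f, -, hfix, rfl, -⟩ := h
  intro b hb
  rw [← hfix b hb]
  exact mem_image_of_mem f (hBC₀ hb)

theorem card_eq (h : copyOver rel B C₀ C') : C'.card = C₀.card := by
  obtain ⟨f, hinj, -, rfl, -⟩ := h
  exact card_image_of_injOn hinj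

variable [Fintype L] {α : L → ℝ}

theorem delta_eq (h : copyOver rel B C₀ C') : delta α rel C' = delta α rel C₀ := by
  obtain ⟨f, hinj, -, rfl, hrel⟩ := h
  exact delta_image hinj hrel le_rfl

theorem sub_delta_inter_nonneg (hmp : essMinPair α rel B C₀) (h : copyOver rel B C₀ C')
    {Y : Finset V} (hY : Y ⊂ C') : 0 ≤ delta α rel Y - delta α rel (Y ∩ B) := by
  obtain ⟨f, hinj, hfix, rfl, hrel⟩ := h
  obtain ⟨Y₀, hY₀, rfl⟩ := subset_image_iff.mp hY.subset
  have hY₀ss : Y₀ ⊂ C₀ := hY₀.ssubset_of_ne fun heq => hY.ne (heq ▸ rfl)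
  have hinter : Y₀.image f ∩ B = Y₀ ∩ B := by
    ext x
    simp only [mem_inter, mem_image]
    constructor
    · rintro ⟨⟨y, hy, rfl⟩, hfyB⟩
      have hfy : f y = y := hinj (hmp.1.1 hfyB) (hY₀ hy) (hfix _ hfyB)
      exact ⟨by rwa [hfy], hfyB⟩
    · rintro ⟨hx, hxB⟩
      exact ⟨⟨x, hx, hfix x hxB⟩, hxB⟩
  rw [hinter, delta_image hinj hrel hY₀]
  exact hmp.2 Y₀ hY₀ss

end copyOver

end Copies

section FreeJoin

variable {L V ι : Type} [DecidableEq V] {rel : L → Finset V → Prop} {B : Finset V}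
  {C : ι → Finset V}

theorem inter_union_biUnion_eq (hBC : ∀ i, B ⊆ C i) (hdisj : ∀ i j, i ≠ j → C i ∩ C j = B)
    {i : ι} {s : Finset ι} (hi : i ∉ s) : C i ∩ (B ∪ s.biUnion C) = B := by
  refine subset_antisymm (fun x hx => ?_) (subset_inter (hBC i) subset_union_left)
  obtain ⟨hxi, hx⟩ := mem_inter.mp hx
  rcases mem_union.mp hx with hxB | hxs
  · exact hxB
  · obtain ⟨j, hj, hxj⟩ := mem_biUnion.mp hxs
    rw [← hdisj i j (ne_of_mem_of_not_mem hj hi).symm]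
    exact mem_inter.mpr ⟨hxi, hxj⟩

theorem delta_union_biUnion [Fintype L] {α : L → ℝ} (hBC : ∀ i, B ⊆ C i)
    (hdisj : ∀ i j, i ≠ j → C i ∩ C j = B) (s : Finset ι)
    (hfree : ∀ E (e : Finset V), rel E e → e ⊆ B ∪ s.biUnion C → e ⊆ B ∨ ∃ i, e ⊆ C i) :
    delta α rel (B ∪ s.biUnion C) =
      delta α rel B + ∑ i ∈ s, (delta α rel (C i) - delta α rel B) := by
  classical
  induction s using Finset.induction_on with
  | empty => simp
  | insert j s hj ih =>
    set P := B ∪ s.biUnion C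
    have hjoin : B ∪ (insert j s).biUnion C = P ∪ C j := by
      rw [biUnion_insert, union_left_comm, union_comm (C j)]
    have hPj : P ∩ C j = B := by rw [inter_comm]; exact inter_union_biUnion_eq hBC hdisj hj
    have hfreeP : ∀ E (e : Finset V), rel E e → e ⊆ P ∪ C j → e ⊆ P ∨ e ⊆ C j := by
      intro E e hr he
      rcases hfree E e hr (hjoin ▸ he) with hB | ⟨i, hi⟩
      · exact Or.inl (hB.trans subset_union_left)
      by_cases his : i ∈ s
      · exact Or.inl (hi.trans ((subset_biUnion_of_mem C his).trans subset_union_right))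
      by_cases hij : i = j
      · exact Or.inr (hij ▸ hi)
      have hiB := inter_union_biUnion_eq hBC hdisj (s := insert j s) (i := i)
        (by simp [hij, his])
      rw [hjoin] at hiB
      exact Or.inl ((subset_inter hi he).trans (hiB.trans_subset subset_union_left))
    have hP := ih fun E e hr he => hfree E e hr (he.trans (hjoin ▸ subset_union_left))
    have hmod := delta_union_add_delta_inter (α := α) hfreeP
    rw [hPj] at hmod
    rw [hjoin, sum_insert hj]
    linarith

variable [Fintype ι]

structure IsFreeJoin (rel : L → Finset V → Prop) (B : Finset V) (C : ι → Finset V) : Prop where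
  subset : ∀ i, B ⊆ C i
  inter_eq : ∀ i j, i ≠ j → C i ∩ C j = B
  free : ∀ E (e : Finset V), rel E e → e ⊆ B ∪ univ.biUnion C → e ⊆ B ∨ ∃ i, e ⊆ C i

namespace IsFreeJoin

theorem inter {X : Finset V} (hD : IsFreeJoin rel B C) (hX : X ⊆ B ∪ univ.biUnion C) :
    IsFreeJoin rel (X ∩ B) (fun i => X ∩ C i) := by
  refine ⟨fun i => inter_subset_inter_left (hD.subset i), fun i j hij => ?_,
    fun E e hr he => ?_⟩
  · rw [← inter_inter_distrib_left, hD.inter_eq i j hij]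
  · have heX : e ⊆ X := he.trans (union_subset inter_subset_left
      (biUnion_subset.mpr fun i _ => inter_subset_left))
    rcases hD.free E e hr (heX.trans hX) with hB | ⟨i, hi⟩
    · exact Or.inl (subset_inter heX hB)
    · exact Or.inr ⟨i, subset_inter heX hi⟩

variable [Fintype L] {α : L → ℝ}

theorem delta_eq (hD : IsFreeJoin rel B C) :
    delta α rel (B ∪ univ.biUnion C) =
      delta α rel B + ∑ i, (delta α rel (C i) - delta α rel B) :=
  delta_union_biUnion hD.subset hD.inter_eq univ hD.free

theorem delta_eq_of_subset {X : Finset V} (hD : IsFreeJoin rel B C)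
    (hX : X ⊆ B ∪ univ.biUnion C) :
    delta α rel X = delta α rel (X ∩ B) + ∑ i, (delta α rel (X ∩ C i) - delta α rel (X ∩ B)) := by
  have hXeq : X ∩ B ∪ univ.biUnion (fun i => X ∩ C i) = X := by
    rw [← inter_biUnion, ← inter_union_distrib_left, inter_eq_left.mpr hX]
  rw [← (hD.inter hX).delta_eq, hXeq]

theorem sub_delta_inter_nonneg {X : Finset V} (hD : IsFreeJoin rel B C)
    (hess : ∀ i, ∀ Y ⊂ C i, 0 ≤ delta α rel Y - delta α rel (Y ∩ B)) {i : ι}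
    (hi : ¬ C i ⊆ X) : 0 ≤ delta α rel (X ∩ C i) - delta α rel (X ∩ B) := by
  have h := hess i (X ∩ C i) (inter_subset_right.ssubset_of_ne fun heq =>
    hi (heq ▸ inter_subset_left))
  rwa [inter_assoc, inter_eq_right.mpr (hD.subset i)] at h

theorem delta_inter_le {X : Finset V} (hD : IsFreeJoin rel B C)
    (hess : ∀ i, ∀ Y ⊂ C i, 0 ≤ delta α rel Y - delta α rel (Y ∩ B))
    (hX : X ⊆ B ∪ univ.biUnion C) (hnot : ∀ i, ¬ C i ⊆ X) :
    delta α rel (X ∩ B) ≤ delta α rel X := by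
  rw [hD.delta_eq_of_subset hX, le_add_iff_nonneg_right]
  exact sum_nonneg fun i _ => hD.sub_delta_inter_nonneg hess (hnot i)

theorem delta_inter_le_or_delta_le {X : Finset V} (hD : IsFreeJoin rel B C)
    (hess : ∀ i, ∀ Y ⊂ C i, 0 ≤ delta α rel Y - delta α rel (Y ∩ B))
    (hle : ∀ i, delta α rel (C i) ≤ delta α rel B) (hX : X ⊆ B ∪ univ.biUnion C) :
    delta α rel (X ∩ B) ≤ delta α rel X ∨
      delta α rel (B ∪ univ.biUnion C) ≤ delta α rel X := by
  by_cases hsome : ∃ i, C i ⊆ X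
  · right
    obtain ⟨i₀, hi₀⟩ := hsome
    have hXB : X ∩ B = B := inter_eq_right.mpr ((hD.subset i₀).trans hi₀)
    have hterm : ∀ i, delta α rel (C i) - delta α rel B ≤
        delta α rel (X ∩ C i) - delta α rel (X ∩ B) := by
      intro i
      by_cases hi : C i ⊆ X
      · rw [inter_eq_right.mpr hi, hXB]
      · linarith [hle i, hD.sub_delta_inter_nonneg hess hi]
    rw [hD.delta_eq, hD.delta_eq_of_subset hX, hXB]
    simpa only [hXB, add_le_add_iff_left] using sum_le_sum fun i _ => hterm i
  · exact Or.inl (hD.delta_inter_le hess hX (not_exists.mp hsome))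

theorem inK_of_delta_nonneg (hD : IsFreeJoin rel B C)
    (hess : ∀ i, ∀ Y ⊂ C i, 0 ≤ delta α rel Y - delta α rel (Y ∩ B))
    (hle : ∀ i, delta α rel (C i) ≤ delta α rel B) (hBK : inK α rel B)
    (h0 : 0 ≤ delta α rel (B ∪ univ.biUnion C)) :
    inK α rel (B ∪ univ.biUnion C) := fun _ hX =>
  (hD.delta_inter_le_or_delta_le hess hle hX).elim (hBK _ inter_subset_right).trans
    h0.trans

theorem strong_of_delta_le {A : Finset V} (hD : IsFreeJoin rel B C)
    (hess : ∀ i, ∀ Y ⊂ C i, 0 ≤ delta α rel Y - delta α rel (Y ∩ B))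
    (hle : ∀ i, delta α rel (C i) ≤ delta α rel B) (hAB : strong α rel A B)
    (hAD : delta α rel A ≤ delta α rel (B ∪ univ.biUnion C)) :
    strong α rel A (B ∪ univ.biUnion C) := by
  refine ⟨hAB.1.trans subset_union_left, fun X hAX hXD => ?_⟩
  have hAXB : delta α rel A ≤ delta α rel (X ∩ B) :=
    hAB.2 _ (subset_inter hAX hAB.1) inter_subset_right
  exact (hD.delta_inter_le_or_delta_le hess hle hXD).elim hAXB.trans hAD.trans

theorem not_embedsOver_of_card_lt {G : Finset V} (hD : IsFreeJoin rel B C)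
    (hess : ∀ i, ∀ Y ⊂ C i, 0 ≤ delta α rel Y - delta α rel (Y ∩ B))
    (hG : minPair α rel B G) (hcard : ∀ i, G.card < (C i).card) :
    ¬ embedsOver rel B G (B ∪ univ.biUnion C) := by
  rintro ⟨f, hinj, hfix, himg, hrel⟩
  have hBG : B ⊆ G.image f := fun b hb => hfix b hb ▸ mem_image_of_mem f (hG.1 hb)
  have hnot : ∀ i, ¬ C i ⊆ G.image f := fun i hCi =>
    ((card_le_card hCi).trans card_image_le).not_gt (hcard i)
  have hge := hD.delta_inter_le hess himg hnot
  rw [inter_eq_right.mpr hBG, delta_image hinj hrel le_rfl] at hge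
  exact hge.not_gt hG.delta_lt

end IsFreeJoin

end FreeJoin

theorem stmt13_general {L V : Type} [Fintype L] [DecidableEq V] (α : L → ℝ)
    (rel : L → Finset V → Prop)
    (A B C₀ : Finset V) (hBK : inK α rel B)
    (hAB : strong α rel A B) (hmp : essMinPair α rel B C₀)
    (γ : ℝ) (hγ : γ = -(delta α rel C₀ - delta α rel B))
    (k : ℕ) (hk : (k : ℝ) * γ ≤ delta α rel B - delta α rel A)
    (hk' : delta α rel B - delta α rel A < ((k : ℝ) + 1) * γ)
    (C : Fin k → Finset V)
    (hcopy : ∀ i, copyOver rel B C₀ (C i))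
    (hdisj : ∀ i j, i ≠ j → C i ∩ C j = B)
    (D : Finset V) (hD : D = B ∪ Finset.univ.biUnion C)
    (hfree : ∀ E (e : Finset V), rel E e → e ⊆ D → (e ⊆ B ∨ ∃ i, e ⊆ C i)) :
    inK α rel D ∧ strong α rel A D ∧
      0 ≤ delta α rel D - delta α rel A ∧
      delta α rel D - delta α rel A < γ ∧
      ∀ G : Finset V, minPair α rel B G → G.card < C₀.card →
        ¬ embedsOver rel B G D := by
  subst hD
  have hjoin : IsFreeJoin rel B C := ⟨fun i => (hcopy i).subset hmp.1.1, hdisj, hfree⟩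
  have hess : ∀ i, ∀ Y ⊂ C i, 0 ≤ delta α rel Y - delta α rel (Y ∩ B) :=
    fun i _ hY => (hcopy i).sub_delta_inter_nonneg hmp hY
  have hle : ∀ i, delta α rel (C i) ≤ delta α rel B :=
    fun i => (hcopy i).delta_eq ▸ hmp.1.delta_lt.le
  have hδD : delta α rel (B ∪ univ.biUnion C) = delta α rel B - k * γ := by
    simp only [hjoin.delta_eq, (hcopy _).delta_eq, sum_const, card_univ,
      Fintype.card_fin, nsmul_eq_mul, hγ]
    ring
  have hδA : 0 ≤ delta α rel A := hBK A hAB.1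
  refine ⟨hjoin.inK_of_delta_nonneg hess hle hBK (by linarith),
    hjoin.strong_of_delta_le hess hle hAB (by linarith), by linarith, by linarith,
    fun G hG hcard => hjoin.not_embedsOver_of_card_lt hess hG fun i => ?_⟩
  rwa [(hcopy i).card_eq]

/-- Let `A ≤ B` in `K_α`, `(B, C₀)` an essential minimal pair with `γ = -δ(C₀/B)`,
and `k` the nonnegative integer with `kγ ≤ δ(B/A) < (k+1)γ`. If `D` is the free
join of `k` copies of `C₀` over `B`, then `D ∈ K_α`, `A ≤ D`, `0 ≤ δ(D/A) < γ`,
and no minimal pair `(B, G)` with `|G| < |C₀|` embeds into `D` over `B`. -/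
theorem stmt13 {L V : Type} [Fintype L] [DecidableEq V] (α : L → ℝ)
    (hα : ∀ E, 0 < α E ∧ α E ≤ 1) (ar : L → ℕ) (har : ∀ E, 2 ≤ ar E)
    (rel : L → Finset V → Prop) (hedge : ∀ E e, rel E e → e.card = ar E)
    (A B C₀ : Finset V) (hAK : inK α rel A) (hBK : inK α rel B)
    (hCK : inK α rel C₀)
    (hAB : strong α rel A B) (hmp : essMinPair α rel B C₀)
    (γ : ℝ) (hγ : γ = -(delta α rel C₀ - delta α rel B))
    (k : ℕ) (hk : (k : ℝ) * γ ≤ delta α rel B - delta α rel A)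
    (hk' : delta α rel B - delta α rel A < ((k : ℝ) + 1) * γ)
    (C : Fin k → Finset V)
    (hcopy : ∀ i, copyOver rel B C₀ (C i))
    (hdisj : ∀ i j, i ≠ j → C i ∩ C j = B)
    (D : Finset V) (hD : D = B ∪ Finset.univ.biUnion C)
    (hfree : ∀ E (e : Finset V), rel E e → e ⊆ D → (e ⊆ B ∨ ∃ i, e ⊆ C i)) :
    inK α rel D ∧ strong α rel A D ∧
      0 ≤ delta α rel D - delta α rel A ∧
      delta α rel D - delta α rel A < γ ∧
      ∀ G : Finset V, minPair α rel B G → G.card < C₀.card →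
        ¬ embedsOver rel B G D :=
  stmt13_general α rel A B C₀ hBK hAB hmp γ hγ k hk hk' C hcopy hdisj D hD hfree
end

section
/- Let M be a model of the universal theory of S_α, let A, B ∈ K_α with B ∩ M = A, and let N = M ⊕_A B be the free join. If A ≤ B, then N preserves closures for M: every subset X ⊆ M closed in M is closed in N. -/
open Finset

/-- `M ⊨ S_α^∀`: every finite substructure of `M` lies in `K_α`. -/
def modelsUnivTh {L V : Type} [Fintype L] (α : L → ℝ)
    (rel : L → Finset V → Prop) (M : Set V) : Prop :=
  ∀ A : Finset V, ↑A ⊆ M → inK α rel A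

/-- `X` is closed in `Z`: every minimal pair `(D, E)` with `D ⊆ X` finite and
`E ⊆ Z` satisfies `E ⊆ X`. -/
def closedIn {L V : Type} [Fintype L] (α : L → ℝ)
    (rel : L → Finset V → Prop) (X Z : Set V) : Prop :=
  ∀ D E : Finset V, ↑D ⊆ X → ↑E ⊆ Z → minPair α rel D E → ↑E ⊆ X

/-- A finite `A` is strong in the (possibly infinite) `M`:
`A ≤ F` for every finite `A ⊆ F ⊆ M`. -/
def strongIn {L V : Type} [Fintype L] (α : L → ℝ)
    (rel : L → Finset V → Prop) (A : Finset V) (M : Set V) : Prop :=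
  ↑A ⊆ M ∧ ∀ F : Finset V, A ⊆ F → ↑F ⊆ M → strong α rel A F

/-- `M` has finite closures: every finite subset of `M` is contained in a
finite strong substructure of `M`. -/
def finiteClosures {L V : Type} [Fintype L] (α : L → ℝ)
    (rel : L → Finset V → Prop) (M : Set V) : Prop :=
  ∀ A : Finset V, ↑A ⊆ M → ∃ B : Finset V, A ⊆ B ∧ strongIn α rel B M

/-- `N` preserves closures for `M`: every `X ⊆ M` closed in `M` is closed in `N`. -/
def preservesClosures {L V : Type} [Fintype L] (α : L → ℝ)
    (rel : L → Finset V → Prop) (M N : Set V) : Prop :=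
  ∀ X ⊆ M, closedIn α rel X M → closedIn α rel X N

lemma edgeSet_finite {L V : Type} (rel : L → Finset V → Prop) (E : L) (A : Finset V) :
    {e : Finset V | e ⊆ A ∧ rel E e}.Finite :=
  Set.Finite.subset A.powerset.finite_toSet (fun e he => by
    simpa [Finset.mem_powerset] using he.1)

lemma diffSet_finite {L V : Type} (rel : L → Finset V → Prop) (E : L) (Y X : Finset V) :
    {e : Finset V | e ⊆ X ∧ rel E e ∧ ¬ e ⊆ Y}.Finite :=
  (edgeSet_finite rel E X).subset (fun e he => ⟨he.1, he.2.1⟩)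

lemma edgeCount_split {L V : Type} (rel : L → Finset V → Prop) (E : L)
    {Y X : Finset V} (h : Y ⊆ X) :
    edgeCount rel E X =
      edgeCount rel E Y + {e : Finset V | e ⊆ X ∧ rel E e ∧ ¬ e ⊆ Y}.ncard := by
  unfold edgeCount
  rw [← Set.ncard_union_eq ?disj (edgeSet_finite rel E Y) (diffSet_finite rel E Y X)]
  · congr 1
    ext e
    simp only [Set.mem_setOf_eq, Set.mem_union]
    constructor
    · rintro ⟨h1, h2⟩
      by_cases hY : e ⊆ Y
      · exact Or.inl ⟨hY, h2⟩
      · exact Or.inr ⟨h1, h2, hY⟩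
    · rintro (⟨h1, h2⟩ | ⟨h1, h2, _⟩)
      · exact ⟨h1.trans h, h2⟩
      · exact ⟨h1, h2⟩
  case disj =>
    rw [Set.disjoint_left]
    rintro e ⟨h1, _⟩ ⟨_, _, h3⟩
    exact h3 h1

lemma delta_sub {L V : Type} [Fintype L] (α : L → ℝ) (rel : L → Finset V → Prop)
    {Y X : Finset V} (h : Y ⊆ X) :
    delta α rel X - delta α rel Y =
      ((X.card : ℝ) - Y.card) -
        ∑ E, α E * ({e : Finset V | e ⊆ X ∧ rel E e ∧ ¬ e ⊆ Y}.ncard : ℝ) := by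
  unfold delta
  have hs : ∀ E ∈ (Finset.univ : Finset L),
      α E * (edgeCount rel E X : ℝ) =
        α E * (edgeCount rel E Y : ℝ) +
          α E * ({e : Finset V | e ⊆ X ∧ rel E e ∧ ¬ e ⊆ Y}.ncard : ℝ) := by
    intro E _
    rw [edgeCount_split rel E h]
    push_cast
    ring
  rw [Finset.sum_congr rfl hs, Finset.sum_add_distrib]
  ring

/-- If `M ⊨ S_α^∀`, `A, B ∈ K_α`, `B ∩ M = A`, `A ≤ B`, and `N = M ⊕_A B` is the
free join, then `N` preserves closures for `M`. -/
theorem stmt14 {L V : Type} [Fintype L] [DecidableEq V] (α : L → ℝ)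
    (hα : ∀ E, 0 < α E ∧ α E ≤ 1) (ar : L → ℕ) (har : ∀ E, 2 ≤ ar E)
    (rel : L → Finset V → Prop) (hedge : ∀ E e, rel E e → e.card = ar E)
    (M : Set V) (hM : modelsUnivTh α rel M)
    (A B : Finset V) (hAK : inK α rel A) (hBK : inK α rel B)
    (hBM : ↑B ∩ M = (↑A : Set V)) (hAB : strong α rel A B)
    (hfree : ∀ E (e : Finset V), rel E e → ↑e ⊆ M ∪ ↑B → (↑e ⊆ M ∨ e ⊆ B)) :
    preservesClosures α rel M (M ∪ ↑B) := by
  intro X hXM hXcl D E hDX hEN hmin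
  classical
  by_cases hEM : ↑E ⊆ M
  · exact hXcl D E hDX hEM hmin
  exfalso
  obtain ⟨hDE, hprop, hnstrong⟩ := hmin
  set E₁ : Finset V := E.filter (fun x => x ∈ M) with hE₁def
  set E₂ : Finset V := E.filter (fun x => x ∉ M) with hE₂def
  have hAM : (↑A : Set V) ⊆ M := by rw [← hBM]; exact Set.inter_subset_right
  have hE₂B : E₂ ⊆ B := by
    intro x hx
    rw [hE₂def, Finset.mem_filter] at hx
    rcases hEN hx.1 with h | h
    · exact absurd h hx.2
    · exact h
  have hE₂ne : E₂.Nonempty := by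
    rw [hE₂def, Finset.filter_nonempty_iff]
    by_contra h
    push_neg at h
    exact hEM (fun x hx => h x hx)
  have hDE₁ : D ⊆ E₁ := by
    intro x hx
    rw [hE₁def, Finset.mem_filter]
    exact ⟨hDE hx, hXM (hDX hx)⟩
  have hE₁E : E₁ ⊂ E := by
    rw [Finset.ssubset_iff_of_subset (Finset.filter_subset _ _)]
    obtain ⟨x, hx⟩ := hE₂ne
    rw [hE₂def, Finset.mem_filter] at hx
    exact ⟨x, hx.1, by simp only [hE₁def, Finset.mem_filter]; tauto⟩
  -- from failure of strong D E and minimality: δ(E) < δ(D)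
  have hEδ : delta α rel E < delta α rel D := by
    by_contra hge
    push_neg at hge
    refine hnstrong ⟨hDE, fun A' hDA' hA'E => ?_⟩
    rcases eq_or_lt_of_le hA'E with rfl | hlt
    · exact hge
    · exact (hprop A' hDA' hlt).2 A' hDA' le_rfl
  have hDδ : delta α rel D ≤ delta α rel E₁ :=
    (hprop E₁ hDE₁ hE₁E).2 E₁ hDE₁ le_rfl
  -- key inequality: δ(E₁) ≤ δ(E)
  set Q : Finset V := A ∪ E₂ with hQdef
  have hQB : Q ⊆ B := Finset.union_subset hAB.1 hE₂B
  have hdisj : Disjoint A E₂ := by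
    rw [Finset.disjoint_left]
    intro x hxA hxE₂
    rw [hE₂def, Finset.mem_filter] at hxE₂
    exact hxE₂.2 (hAM hxA)
  have hQcard : (Q.card : ℝ) = A.card + E₂.card := by
    rw [hQdef, Finset.card_union_of_disjoint hdisj]; push_cast; ring
  have hEcard : (E.card : ℝ) = E₁.card + E₂.card := by
    rw [hE₁def, hE₂def]
    exact_mod_cast (Finset.card_filter_add_card_filter_not
      (s := E) (p := fun x => x ∈ M)).symm
  -- edge inclusion
  have hincl : ∀ Erel : L,
      {e : Finset V | e ⊆ E ∧ rel Erel e ∧ ¬ e ⊆ E₁} ⊆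
        {e : Finset V | e ⊆ Q ∧ rel Erel e ∧ ¬ e ⊆ A} := by
    intro Erel e he
    obtain ⟨heE, herel, heE₁⟩ := he
    have heMB : (↑e : Set V) ⊆ M ∪ ↑B := fun x hx => by
      have := hEN (heE hx); exact this
    have heB : e ⊆ B := by
      rcases hfree Erel e herel heMB with h | h
      · exact absurd (fun x hx => by
          rw [hE₁def, Finset.mem_filter]; exact ⟨heE hx, h hx⟩) heE₁
      · exact h
    refine ⟨?_, herel, ?_⟩
    · intro x hx
      rw [hQdef, Finset.mem_union]
      by_cases hxM : x ∈ M
      · left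
        have : (x : V) ∈ (↑B : Set V) ∩ M := ⟨heB hx, hxM⟩
        rw [hBM] at this
        exact this
      · right
        rw [hE₂def, Finset.mem_filter]
        exact ⟨heE hx, hxM⟩
    · intro heA
      exact heE₁ (fun x hx => by
        rw [hE₁def, Finset.mem_filter]
        exact ⟨heE hx, hAM (heA hx)⟩)
  have hcount : ∀ Erel : L,
      ({e : Finset V | e ⊆ E ∧ rel Erel e ∧ ¬ e ⊆ E₁}.ncard : ℝ) ≤
        ({e : Finset V | e ⊆ Q ∧ rel Erel e ∧ ¬ e ⊆ A}.ncard : ℝ) := by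
    intro Erel
    exact_mod_cast Set.ncard_le_ncard (hincl Erel) (diffSet_finite rel Erel A Q)
  have hsum : ∑ Erel, α Erel * ({e : Finset V | e ⊆ E ∧ rel Erel e ∧ ¬ e ⊆ E₁}.ncard : ℝ) ≤
      ∑ Erel, α Erel * ({e : Finset V | e ⊆ Q ∧ rel Erel e ∧ ¬ e ⊆ A}.ncard : ℝ) :=
    Finset.sum_le_sum (fun Erel _ =>
      mul_le_mul_of_nonneg_left (hcount Erel) (le_of_lt (hα Erel).1))
  have hQδ : 0 ≤ delta α rel Q - delta α rel A :=
    sub_nonneg.mpr (hAB.2 Q Finset.subset_union_left hQB)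
  have h1 := delta_sub α rel (Finset.subset_union_left : A ⊆ Q)
  have h2 := delta_sub α rel hE₁E.subset
  linarith
end

section
/- Suppose ⟨M_β⟩_{β<κ} is a ⊆-increasing chain of models of S_α^∀ with unions taken at limits, and M_{β+1} preserves closures for M_β for each β. Then M = ∪_{β<κ} M_β preserves closures for each M_β; moreover if each M_β has finite closures, so does M. -/
open Finset

/-!
For a finite set `B ⊆ M`, being closed in `M` and being strong in `M` coincide. Strong implies
closed by submodularity of `δ`: a minimal pair `(D, E)` with `D ⊆ B ⊉ E` would give
`δ(E) < δ(E ∩ B)` and `δ(B) ≤ δ(B ∪ E)`, against `δ(B ∪ E) + δ(B ∩ E) ≤ δ(B) + δ(E)`; closed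
implies strong because the first finite superset over which `B` fails to be strong would form a
minimal pair with it. Closedness of `X ⊆ M_β` then climbs the chain by transfinite induction:
successor steps are the hypothesis, and at limit stages (as in the union) a minimal pair is
finite, so it already lies in an earlier stage. Finally a finite `A` in the
union lies in some `M_β`; its finite closure `B` there is closed in `M_β`, hence closed, and
therefore strong, in the union.
-/

section Rank

variable {L V : Type}

theorem edgeCount_add_edgeCount_le [DecidableEq V] (rel : L → Finset V → Prop) (E : L)
    (A B : Finset V) :
    edgeCount rel E A + edgeCount rel E B ≤
      edgeCount rel E (A ∪ B) + edgeCount rel E (A ∩ B) := by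
  have hfin : ∀ C : Finset V, {e : Finset V | e ⊆ C ∧ rel E e}.Finite := fun C =>
    C.powerset.finite_toSet.subset fun e he => Finset.mem_coe.2 (Finset.mem_powerset.2 he.1)
  have hunion : {e : Finset V | e ⊆ A ∧ rel E e} ∪ {e | e ⊆ B ∧ rel E e}
      ⊆ {e | e ⊆ A ∪ B ∧ rel E e} := by
    rintro e (⟨he, hr⟩ | ⟨he, hr⟩)
    · exact ⟨he.trans subset_union_left, hr⟩
    · exact ⟨he.trans subset_union_right, hr⟩
  have hinter : {e : Finset V | e ⊆ A ∧ rel E e} ∩ {e | e ⊆ B ∧ rel E e}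
      = {e | e ⊆ A ∩ B ∧ rel E e} := by
    ext e
    simp only [Set.mem_inter_iff, Set.mem_ofPred_eq, subset_inter_iff]
    tauto
  have := Set.ncard_union_add_ncard_inter _ _ (hfin A) (hfin B)
  have := Set.ncard_le_ncard hunion (hfin (A ∪ B))
  unfold edgeCount
  rw [← hinter]
  omega

variable [Fintype L] {α : L → ℝ} {rel : L → Finset V → Prop}

theorem delta_union_add_delta_inter_le [DecidableEq V] (hα : ∀ E, 0 ≤ α E) (A B : Finset V) :
    delta α rel (A ∪ B) + delta α rel (A ∩ B) ≤ delta α rel A + delta α rel B := by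
  have hcard : ((A ∪ B).card : ℝ) + (A ∩ B).card = A.card + B.card := by
    exact_mod_cast card_union_add_card_inter A B
  have hedges : ∑ E, α E * (edgeCount rel E A : ℝ) + ∑ E, α E * (edgeCount rel E B : ℝ)
      ≤ ∑ E, α E * (edgeCount rel E (A ∪ B) : ℝ) + ∑ E, α E * (edgeCount rel E (A ∩ B) : ℝ) := by
    simp only [← sum_add_distrib, ← mul_add]
    refine sum_le_sum fun E _ => mul_le_mul_of_nonneg_left ?_ (hα E)
    exact_mod_cast edgeCount_add_edgeCount_le rel E A B
  simp only [delta]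
  linarith

theorem strong.delta_le {A B : Finset V} (h : strong α rel A B) :
    delta α rel A ≤ delta α rel B :=
  h.2 B h.1 Subset.rfl

theorem minPair.delta_lt_s16 {D E C : Finset V} (h : minPair α rel D E) (hDC : D ⊆ C)
    (hCE : C ⊂ E) : delta α rel E < delta α rel C := by
  obtain ⟨hDE, hmin, hns⟩ := h
  have hED : delta α rel E < delta α rel D := by
    refine lt_of_not_ge fun hDE' => hns ⟨hDE, fun A hDA hAE => ?_⟩
    rcases hAE.ssubset_or_eq with hAE | rfl
    · exact (hmin A hDA hAE).delta_le
    · exact hDE'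
  exact hED.trans_le (hmin C hDC hCE).delta_le

theorem strongIn_of_closedIn {B : Finset V} {M : Set V} (hBM : (B : Set V) ⊆ M)
    (h : closedIn α rel B M) : strongIn α rel B M := by
  refine ⟨hBM, fun F hBF hFM => ?_⟩
  induction F using Finset.strongInduction with
  | H F ih =>
    refine ⟨hBF, fun A hBA hAF => ?_⟩
    rcases hAF.ssubset_or_eq with hAF | rfl
    · exact (ih A hAF hBA ((coe_subset.2 hAF.subset).trans hFM)).delta_le
    · by_contra hlt
      have hpair : minPair α rel B A :=
        ⟨hBA, fun C hBC hCA => ih C hCA hBC ((coe_subset.2 hCA.subset).trans hFM),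
          fun hs => hlt hs.delta_le⟩
      have hAB : A = B := (coe_subset.1 (h B A Set.Subset.rfl hFM hpair)).antisymm hBA
      exact hlt (hAB ▸ le_rfl)

theorem closedIn_of_strongIn [DecidableEq V] (hα : ∀ E, 0 ≤ α E) {B : Finset V} {M : Set V}
    (h : strongIn α rel B M) : closedIn α rel B M := by
  intro D E hDB hEM hpair
  by_contra hEB
  have hEBE : E ∩ B ⊂ E := ⟨inter_subset_left, fun hE => hEB fun x hx =>
    (mem_inter.1 (hE (mem_coe.1 hx))).2⟩
  have hlt := hpair.delta_lt_s16 (subset_inter hpair.1 (coe_subset.1 hDB)) hEBE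
  have hsub := delta_union_add_delta_inter_le (rel := rel) hα B E
  have hBE : delta α rel B ≤ delta α rel (B ∪ E) :=
    (h.2 (B ∪ E) subset_union_left (by simpa using Set.union_subset h.1 hEM)).delta_le
  rw [inter_comm] at hsub
  linarith

theorem strongIn_of_preservesClosures (hα : ∀ E, 0 ≤ α E) {B : Finset V} {M N : Set V}
    (hMN : M ⊆ N) (hp : preservesClosures α rel M N) (hB : strongIn α rel B M) :
    strongIn α rel B N := by
  classical
  exact strongIn_of_closedIn (hB.1.trans hMN) (hp B hB.1 (closedIn_of_strongIn hα hB))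

theorem finiteClosures_empty : finiteClosures α rel (∅ : Set V) := by
  intro A hA
  have hA : A = ∅ := coe_eq_empty.1 (Set.subset_empty_iff.1 hA)
  subst hA
  refine ⟨∅, Subset.rfl, by simp, fun F _ hF => ?_⟩
  obtain rfl : F = ∅ := coe_eq_empty.1 (Set.subset_empty_iff.1 hF)
  exact ⟨Subset.rfl, fun A _ hA => by rw [subset_empty.1 hA]⟩

theorem closedIn_of_forall_finset {X Z : Set V}
    (h : ∀ E : Finset V, (E : Set V) ⊆ Z → ∃ Y, (E : Set V) ⊆ Y ∧ closedIn α rel X Y) :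
    closedIn α rel X Z := by
  intro D E hD hE hpair
  obtain ⟨Y, hEY, hY⟩ := h E hE
  exact hY D E hD hEY hpair

end Rank

theorem exists_stage_of_finset_subset_biUnion {ι V : Type*} [LinearOrder ι] {M : ι → Set V}
    {θ : ι} (hmono : ∀ β γ, β ≤ γ → γ < θ → M β ⊆ M γ) {E : Finset V}
    (hE : (E : Set V) ⊆ ⋃ (β : ι) (_ : β < θ), M β) {β₀ : ι} (hβ₀ : β₀ < θ) :
    ∃ γ, β₀ ≤ γ ∧ γ < θ ∧ (E : Set V) ⊆ M γ := by
  have hdir : DirectedOn (fun β γ => M β ⊆ M γ) (Set.Iio θ) := fun β hβ γ hγ =>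
    ⟨max β γ, max_lt hβ hγ, hmono _ _ (le_max_left β γ) (max_lt hβ hγ),
      hmono _ _ (le_max_right β γ) (max_lt hβ hγ)⟩
  obtain ⟨β, hβ, hEβ⟩ := hdir.exists_mem_subset_of_finset_subset_biUnion ⟨β₀, hβ₀⟩ hE
  exact ⟨max β β₀, le_max_right _ _, max_lt hβ hβ₀,
    hEβ.trans (hmono _ _ (le_max_left _ _) (max_lt hβ hβ₀))⟩

section Chain

variable {L V : Type} [Fintype L] {α : L → ℝ} {rel : L → Finset V → Prop} {κ : Ordinal}
  {M : Ordinal → Set V}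

theorem closedIn_of_le_of_preservesClosures_succ
    (hmono : ∀ β γ : Ordinal, β ≤ γ → γ < κ → M β ⊆ M γ)
    (hlim : ∀ γ : Ordinal, γ < κ → Order.IsSuccLimit γ → M γ = ⋃ (β : Ordinal) (_ : β < γ), M β)
    (hpres : ∀ β : Ordinal, β + 1 < κ → preservesClosures α rel (M β) (M (β + 1)))
    {β : Ordinal} {X : Set V} (hX : X ⊆ M β) (hcl : closedIn α rel X (M β)) (γ : Ordinal) :
    β ≤ γ → γ < κ → closedIn α rel X (M γ) := by
  induction γ using WellFoundedLT.induction with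
  | _ γ ih =>
  intro hβγ hγκ
  rcases hβγ.eq_or_lt with rfl | hβγ
  · exact hcl
  rcases Ordinal.zero_or_succ_or_isSuccLimit γ with rfl | ⟨δ, rfl⟩ | hγ
  · exact absurd hβγ not_lt_zero
  · rw [Order.succ_eq_add_one] at hβγ hγκ ⊢
    have hδκ : δ < κ := (lt_add_one δ).trans hγκ
    have hβδ : β ≤ δ := Order.lt_add_one_iff.1 hβγ
    exact hpres δ hγκ X (hX.trans (hmono β δ hβδ hδκ)) (ih δ (lt_add_one δ) hβδ hδκ)
  · rw [hlim γ hγκ hγ]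
    refine closedIn_of_forall_finset fun E hE => ?_
    obtain ⟨δ, hβδ, hδγ, hEδ⟩ := exists_stage_of_finset_subset_biUnion
      (fun β' γ' h h' => hmono β' γ' h (h'.trans hγκ)) hE hβγ
    exact ⟨M δ, hEδ, ih δ hδγ hβδ (hδγ.trans hγκ)⟩

theorem preservesClosures_iUnion
    (hmono : ∀ β γ : Ordinal, β ≤ γ → γ < κ → M β ⊆ M γ)
    (hlim : ∀ γ : Ordinal, γ < κ → Order.IsSuccLimit γ → M γ = ⋃ (β : Ordinal) (_ : β < γ), M β)
    (hpres : ∀ β : Ordinal, β + 1 < κ → preservesClosures α rel (M β) (M (β + 1)))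
    {β : Ordinal} (hβ : β < κ) :
    preservesClosures α rel (M β) (⋃ (β' : Ordinal) (_ : β' < κ), M β') :=
  fun X hX hcl => closedIn_of_forall_finset fun E hE => by
    obtain ⟨γ, hβγ, hγκ, hEγ⟩ := exists_stage_of_finset_subset_biUnion hmono hE hβ
    exact ⟨M γ, hEγ,
      closedIn_of_le_of_preservesClosures_succ hmono hlim hpres hX hcl γ hβγ hγκ⟩

theorem finiteClosures_iUnion (hα : ∀ E, 0 ≤ α E)
    (hmono : ∀ β γ : Ordinal, β ≤ γ → γ < κ → M β ⊆ M γ)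
    (hpres : ∀ β : Ordinal, β < κ →
      preservesClosures α rel (M β) (⋃ (β' : Ordinal) (_ : β' < κ), M β'))
    (hfc : ∀ β : Ordinal, β < κ → finiteClosures α rel (M β)) :
    finiteClosures α rel (⋃ (β' : Ordinal) (_ : β' < κ), M β') := by
  rcases eq_zero_or_pos κ with rfl | hκ
  · simpa using finiteClosures_empty
  intro A hA
  obtain ⟨β, -, hβ, hAβ⟩ := exists_stage_of_finset_subset_biUnion hmono hA hκ
  obtain ⟨B, hAB, hB⟩ := hfc β hβ A hAβ
  exact ⟨B, hAB, strongIn_of_preservesClosures hα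
    (Set.subset_iUnion₂ (s := fun β' (_ : β' < κ) => M β') β hβ) (hpres β hβ) hB⟩

end Chain

theorem stmt16_general {L V : Type} [Fintype L] (α : L → ℝ)
    (hα : ∀ E, 0 < α E ∧ α E ≤ 1)
    (rel : L → Finset V → Prop)
    (κ : Ordinal) (M : Ordinal → Set V)
    (hmono : ∀ β γ : Ordinal, β ≤ γ → γ < κ → M β ⊆ M γ)
    (hlim : ∀ γ : Ordinal, γ < κ → Order.IsSuccLimit γ → M γ = ⋃ (β : Ordinal) (_ : β < γ), M β)
    (hpres : ∀ β : Ordinal, β + 1 < κ → preservesClosures α rel (M β) (M (β + 1))) :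
    (∀ β : Ordinal, β < κ →
        preservesClosures α rel (M β) (⋃ (β' : Ordinal) (_ : β' < κ), M β')) ∧
      ((∀ β : Ordinal, β < κ → finiteClosures α rel (M β)) →
        finiteClosures α rel (⋃ (β' : Ordinal) (_ : β' < κ), M β')) := by
  have hpresU := fun β (hβ : β < κ) => preservesClosures_iUnion hmono hlim hpres hβ
  exact ⟨hpresU, finiteClosures_iUnion (fun E => (hα E).1.le) hmono hpresU⟩

/-- For a ⊆-increasing chain `⟨M β⟩_{β<κ}` of models of `S_α^∀` with unions at
limits, in which each `M (β+1)` preserves closures for `M β`, the union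
`⋃_{β<κ} M β` preserves closures for each `M β`; and if each `M β` has finite
closures then so does the union. -/
theorem stmt16 {L V : Type} [Fintype L] [DecidableEq V] (α : L → ℝ)
    (hα : ∀ E, 0 < α E ∧ α E ≤ 1) (ar : L → ℕ) (har : ∀ E, 2 ≤ ar E)
    (rel : L → Finset V → Prop) (hedge : ∀ E e, rel E e → e.card = ar E)
    (κ : Ordinal) (M : Ordinal → Set V)
    (hmono : ∀ β γ : Ordinal, β ≤ γ → γ < κ → M β ⊆ M γ)
    (hlim : ∀ γ : Ordinal, γ < κ → Order.IsSuccLimit γ → M γ = ⋃ (β : Ordinal) (_ : β < γ), M β)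
    (hmodels : ∀ β : Ordinal, β < κ → modelsUnivTh α rel (M β))
    (hpres : ∀ β : Ordinal, β + 1 < κ → preservesClosures α rel (M β) (M (β + 1))) :
    (∀ β : Ordinal, β < κ →
        preservesClosures α rel (M β) (⋃ (β' : Ordinal) (_ : β' < κ), M β')) ∧
      ((∀ β : Ordinal, β < κ → finiteClosures α rel (M β)) →
        finiteClosures α rel (⋃ (β' : Ordinal) (_ : β' < κ), M β')) :=
  stmt16_general α hα rel κ M hmono hlim hpres
end
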